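/- Let σ be a morphism on a finite alphabet A prolongable on a, with infinite fixed point u = σ^ω(a), all letters of A occurring in u, and let W(N) = |σ(u₁u₂⋯u_N)| where u₁⋯u_N is the prefix of u of length N. If lim inf_{N→∞} W(N)/N > 1, then the spectral radius of the incidence matrix M_σ is strictly greater than 1. -/

import Mathlib

/-- `w` is a prefix of the infinite word `a`. -/
def IsPrefOf {A : Type*} (w : List A) (a : ℕ → A) : Prop :=
  ∀ i : Fin w.length, w.get i = a i

/-- Fractional power `V^α`: `V^⌊α⌋` followed by the prefix of `V`
of length `⌈{α}·|V|⌉`. -/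
noncomputable def fracPow {A : Type*} (V : List A) (α : ℝ) : List A :=
  (List.replicate ⌊α⌋₊ V).flatten ++ V.take ⌈Int.fract α * V.length⌉₊

/-- The set of admissible exponents in the definition of the Diophantine exponent. -/
def dioSet {A : Type*} (a : ℕ → A) : Set ℝ :=
  {ρ | ∀ N : ℕ, ∃ (U V : List A) (α : ℝ), V ≠ [] ∧ 1 ≤ α ∧
    IsPrefOf (U ++ fracPow V α) a ∧ N ≤ (U ++ fracPow V α).length ∧
    ρ ≤ ((U ++ fracPow V α).length : ℝ) / ((U.length : ℝ) + (V.length : ℝ))}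

/-- Diophantine exponent of an infinite word. -/
noncomputable def dio {A : Type*} (a : ℕ → A) : EReal :=
  sSup ((fun ρ : ℝ => (ρ : EReal)) '' dioSet a)

/-- Action of a morphism (given by its values on letters) on a finite word. -/
def mapW {A : Type*} (σ : A → List A) (w : List A) : List A := w.flatMap σ

/-- `n`-th iterate of a morphism applied to a word. -/
def iterW {A : Type*} (σ : A → List A) (n : ℕ) (w : List A) : List A :=
  (mapW σ)^[n] w

/-- `σ` is prolongable on the letter `a`. -/
def Prolongable {A : Type*} (σ : A → List A) (a : A) : Prop :=
  (∃ W : List A, W ≠ [] ∧ σ a = a :: W) ∧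
  Filter.Tendsto (fun n => (iterW σ n [a]).length) Filter.atTop Filter.atTop

/-- The letter `b` has maximal growth for `σ`. -/
def MaxGrowth {A : Type*} (σ : A → List A) (b : A) : Prop :=
  ∃ C : ℝ, ∀ c : A, ∀ n : ℕ, 1 ≤ n →
    ((iterW σ n [c]).length : ℝ) < C * ((iterW σ n [b]).length : ℝ)

/-- Incidence matrix of a morphism, viewed over `ℂ`. -/
noncomputable def incMat {A : Type*} [Fintype A] [DecidableEq A]
    (σ : A → List A) : Matrix A A ℂ :=
  fun i j => ((σ j).count i : ℂ)

/-- Spectral radius of the incidence matrix of a morphism. -/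
noncomputable def specRad {A : Type*} [Fintype A] [DecidableEq A]
    (σ : A → List A) : ℝ :=
  sSup ((fun μ : ℂ => ‖μ‖) '' spectrum ℂ (incMat σ))

/-! If every eigenvalue of `M_σ` has modulus `< r`, Gelfand's formula gives `‖M_σⁿ‖ = O(rⁿ)`,
and since the Parikh vector of `σⁿ(w)` is `M_σⁿ` applied to that of `w`, also `|σⁿ(w)| = O(rⁿ)`.
On the other hand `|σⁿ⁺¹(w)| = W(|σⁿ(w)|)` with `|σⁿ(w)| → ∞`, so a dilation factor `> ρ` forces
`ρⁿ = O(|σⁿ(w)|)`. Hence the dilation factor is at most the spectral radius. -/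

open Filter Asymptotics Matrix

section BanachAlgebra

variable {𝔸 : Type*} [NormedRing 𝔸] [NormedAlgebra ℂ 𝔸] [CompleteSpace 𝔸]

theorem spectralRadius_le_ofReal_sSup_norm (a : 𝔸) :
    spectralRadius ℂ a ≤ ENNReal.ofReal (sSup ((fun μ : ℂ => ‖μ‖) '' spectrum ℂ a)) := by
  have hbdd : BddAbove ((fun μ : ℂ => ‖μ‖) '' spectrum ℂ a) :=
    ((spectrum.isCompact a).image continuous_norm).bddAbove
  refine iSup₂_le fun μ hμ => ?_
  rw [← ENNReal.ofReal_coe_nnreal, coe_nnnorm]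
  exact ENNReal.ofReal_le_ofReal (le_csSup hbdd ⟨μ, hμ, rfl⟩)

theorem eventually_norm_pow_le_pow_of_spectralRadius_lt {a : 𝔸} {r : ℝ}
    (h : spectralRadius ℂ a < ENNReal.ofReal r) : ∀ᶠ n : ℕ in atTop, ‖a ^ n‖ ≤ r ^ n := by
  have hr : 0 ≤ r := by
    by_contra! hr
    simp [ENNReal.ofReal_of_nonpos hr.le] at h
  filter_upwards [(spectrum.pow_norm_pow_one_div_tendsto_nhds_spectralRadius a).eventually_lt_const h,
    eventually_ge_atTop 1] with n hn hn1
  have hn0 : (0 : ℝ) < n := by exact_mod_cast hn1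
  rw [ENNReal.ofReal_lt_ofReal_iff_of_nonneg (by positivity), one_div,
    Real.rpow_inv_lt_iff_of_pos (norm_nonneg _) hr hn0, Real.rpow_natCast] at hn
  exact hn.le

end BanachAlgebra

theorem geom_isBigO_of_eventually_mul_le {f : ℕ → ℝ} {ρ : ℝ} (hρ : 0 ≤ ρ)
    (hpos : ∀ᶠ n in atTop, 0 < f n) (hstep : ∀ᶠ n in atTop, ρ * f n ≤ f (n + 1)) :
    (fun n => ρ ^ n) =O[atTop] f := by
  obtain ⟨n₀, hn₀⟩ := eventually_atTop.mp (hpos.and hstep)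
  have hf₀ : 0 < f n₀ := (hn₀ n₀ le_rfl).1
  refine IsBigO.of_bound (ρ ^ n₀ / f n₀) (eventually_atTop.mpr ⟨n₀, fun n hn => ?_⟩)
  obtain ⟨k, rfl⟩ := Nat.exists_eq_add_of_le hn
  have hgeom : ρ ^ k * f n₀ ≤ f (n₀ + k) :=
    geom_le (u := fun k => f (n₀ + k)) hρ k fun j _ => (hn₀ (n₀ + j) (by omega)).2
  rw [Real.norm_of_nonneg (by positivity), Real.norm_of_nonneg (hn₀ _ hn).1.le, pow_add,
    div_mul_eq_mul_div, le_div_iff₀ hf₀]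
  nlinarith [pow_nonneg hρ n₀]

theorem IsPrefOf.ofFn_eq {B : Type*} {w : List B} {u : ℕ → B} (h : IsPrefOf w u) :
    List.ofFn (fun i : Fin w.length => u i) = w :=
  List.ext_get (by simp) fun i _ hi => by simpa using (h ⟨i, hi⟩).symm

theorem iterW_succ {B : Type*} (σ : B → List B) (n : ℕ) (w : List B) :
    iterW σ (n + 1) w = mapW σ (iterW σ n w) :=
  Function.iterate_succ_apply' _ _ _

section Incidence

variable {A : Type*} [Fintype A] [DecidableEq A]

def parikhVec (w : List A) : A → ℂ := fun i => (w.count i : ℂ)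

theorem parikhVec_mapW (σ : A → List A) (w : List A) :
    parikhVec (mapW σ w) = incMat σ *ᵥ parikhVec w := by
  induction w with
  | nil => funext i; simp [parikhVec, mapW, mulVec, dotProduct]
  | cons x w ih =>
    funext i
    have hi := congrFun ih i
    simp only [parikhVec, mulVec, dotProduct] at hi ⊢
    rw [show mapW σ (x :: w) = σ x ++ mapW σ w by simp [mapW], List.count_append]
    push_cast
    rw [hi]
    simp [List.count_cons, mul_add, Finset.sum_add_distrib, incMat, add_comm]

theorem parikhVec_iterW (σ : A → List A) (n : ℕ) (w : List A) :
    parikhVec (iterW σ n w) = incMat σ ^ n *ᵥ parikhVec w := by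
  induction n with
  | zero => simp [iterW]
  | succ n ih => rw [iterW_succ, parikhVec_mapW, ih, mulVec_mulVec, ← pow_succ']

theorem norm_parikhVec_le_length (w : List A) : ‖parikhVec w‖ ≤ w.length :=
  (pi_norm_le_iff_of_nonneg (Nat.cast_nonneg _)).mpr fun i => by
    simpa [parikhVec] using List.count_le_length

theorem length_le_card_mul_norm_parikhVec (w : List A) :
    (w.length : ℝ) ≤ Fintype.card A * ‖parikhVec w‖ :=
  calc (w.length : ℝ) = ∑ i, ‖parikhVec w i‖ := by
        simpa [parikhVec, ← Nat.cast_sum] using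
          (Multiset.sum_count_eq_card (s := Finset.univ) (m := (w : Multiset A)) (by simp)).symm
    _ ≤ ∑ _i : A, ‖parikhVec w‖ := Finset.sum_le_sum fun i _ => norm_le_pi_norm _ i
    _ = Fintype.card A * ‖parikhVec w‖ := by simp

attribute [local instance] Matrix.linftyOpNormedRing Matrix.linftyOpNormedAlgebra

theorem length_iterW_le (σ : A → List A) (n : ℕ) (w : List A) :
    ((iterW σ n w).length : ℝ) ≤ Fintype.card A * ‖incMat σ ^ n‖ * w.length := by
  calc ((iterW σ n w).length : ℝ) ≤ Fintype.card A * ‖parikhVec (iterW σ n w)‖ :=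
        length_le_card_mul_norm_parikhVec _
    _ ≤ Fintype.card A * (‖incMat σ ^ n‖ * w.length) := by
        rw [parikhVec_iterW]
        gcongr
        exact (linfty_opNorm_mulVec _ _).trans (by gcongr; exact norm_parikhVec_le_length w)
    _ = Fintype.card A * ‖incMat σ ^ n‖ * w.length := by ring

theorem specRad_nonneg (σ : A → List A) : 0 ≤ specRad σ :=
  Real.sSup_nonneg fun _ ⟨_, _, hμ⟩ => hμ ▸ norm_nonneg _

theorem length_iterW_isBigO_pow (σ : A → List A) (w : List A) {r : ℝ} (hr : specRad σ < r) :
    (fun n => ((iterW σ n w).length : ℝ)) =O[atTop] fun n => r ^ n := by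
  have : CompleteSpace (Matrix A A ℂ) := FiniteDimensional.complete ℂ _
  have hrad : spectralRadius ℂ (incMat σ) < ENNReal.ofReal r :=
    (spectralRadius_le_ofReal_sSup_norm _).trans_lt
      ((ENNReal.ofReal_lt_ofReal_iff ((specRad_nonneg σ).trans_lt hr)).mpr hr)
  refine IsBigO.of_bound (Fintype.card A * w.length) ?_
  filter_upwards [eventually_norm_pow_le_pow_of_spectralRadius_lt hrad] with n hn
  rw [Real.norm_of_nonneg (Nat.cast_nonneg _), Real.norm_of_nonneg (hn.trans' (norm_nonneg _))]
  calc ((iterW σ n w).length : ℝ) ≤ Fintype.card A * ‖incMat σ ^ n‖ * w.length :=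
        length_iterW_le σ n w
    _ ≤ Fintype.card A * r ^ n * w.length := by gcongr
    _ = Fintype.card A * w.length * r ^ n := by ring

end Incidence

theorem geom_isBigO_length_iterW {B : Type*} (σ : B → List B) (w : List B) (u : ℕ → B)
    (hL : Tendsto (fun n => (iterW σ n w).length) atTop atTop)
    (hu : ∀ n, IsPrefOf (iterW σ n w) u) {ρ : ℝ} (hρ₀ : 0 ≤ ρ)
    (hρ : ρ < atTop.liminf fun N : ℕ =>
      ((mapW σ (List.ofFn fun i : Fin N => u i)).length : ℝ) / (N : ℝ)) :
    (fun n => ρ ^ n) =O[atTop] fun n => ((iterW σ n w).length : ℝ) := by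
  have hdil := hL.eventually
    (eventually_lt_of_lt_liminf hρ (isBoundedUnder_of ⟨0, fun N => by positivity⟩))
  have hpos : ∀ᶠ n in atTop, (0 : ℝ) < (iterW σ n w).length :=
    (hL.eventually_gt_atTop 0).mono fun n hn => by exact_mod_cast hn
  refine geom_isBigO_of_eventually_mul_le hρ₀ hpos ?_
  filter_upwards [hdil, hpos] with n hn hn₀
  rw [(hu n).ofFn_eq, ← iterW_succ, lt_div_iff₀ hn₀] at hn
  exact hn.le

theorem liminf_dilation_le_specRad {A : Type*} [Fintype A] [DecidableEq A] (σ : A → List A)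
    (w : List A) (u : ℕ → A) (hL : Tendsto (fun n => (iterW σ n w).length) atTop atTop)
    (hu : ∀ n, IsPrefOf (iterW σ n w) u) :
    atTop.liminf (fun N : ℕ =>
      ((mapW σ (List.ofFn fun i : Fin N => u i)).length : ℝ) / (N : ℝ)) ≤ specRad σ := by
  refine le_of_forall_lt_imp_le_of_dense fun ρ hρ => ?_
  by_contra! hlt
  obtain ⟨r, hr, hrρ⟩ := exists_between hlt
  have hr₀ : 0 ≤ r := (specRad_nonneg σ).trans hr.le
  have hρρ : (fun n => ρ ^ n) =o[atTop] fun n => ρ ^ n :=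
    ((geom_isBigO_length_iterW σ w u hL hu (hr₀.trans hrρ.le) hρ).trans
      (length_iterW_isBigO_pow σ w hr)).trans_isLittleO (isLittleO_pow_pow_of_lt_left hr₀ hrρ)
  exact isLittleO_irrefl (.of_forall fun n => pow_ne_zero n (hr₀.trans_lt hrρ).ne') hρρ

theorem stmt_12_general {A : Type*} [Fintype A] [DecidableEq A] (σ : A → List A) (a : A)
    (hpro : Prolongable σ a)
    (u : ℕ → A) (hu : ∀ n : ℕ, IsPrefOf (iterW σ n [a]) u)
    (hdil : 1 < Filter.atTop.liminf fun N : ℕ =>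
      ((mapW σ (List.ofFn fun i : Fin N => u i)).length : ℝ) / (N : ℝ)) :
    1 < specRad σ :=
  hdil.trans_le (liminf_dilation_le_specRad σ [a] u hpro.2 hu)

/-- if the dilation factor `liminf |σ(u₁⋯u_N)|/N` exceeds 1, then
the spectral radius of the incidence matrix of `σ` exceeds 1. -/
theorem stmt_12 {A : Type*} [Fintype A] [DecidableEq A] (σ : A → List A) (a : A)
    (hpro : Prolongable σ a)
    (u : ℕ → A) (hu : ∀ n : ℕ, IsPrefOf (iterW σ n [a]) u)
    (hall : ∀ c : A, ∃ i : ℕ, u i = c)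
    (hdil : 1 < Filter.atTop.liminf fun N : ℕ =>
      ((mapW σ (List.ofFn fun i : Fin N => u i)).length : ℝ) / (N : ℝ)) :
    1 < specRad σ :=
  stmt_12_general σ a hpro u hu hdil
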